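/- Let B and B' be two barcodes (multisets of intervals) in which every interval has left endpoint 0, with right endpoints listed in non-increasing order as sequences (aₙ) and (bₙ) (padded with zeros). Then ‖(aₙ) − (bₙ)‖_∞ ≤ 2 · d_b(B, B'), where d_b is the bottleneck distance. -/

import Mathlib

/-- `M` is a partial matching between the index sets of two barcodes: it is the graph of
a partial bijection. -/
def IsPartialMatching {m n : ℕ} (M : Finset (Fin m × Fin n)) : Prop :=
  ∀ p ∈ M, ∀ q ∈ M, (p.1 = q.1 → p = q) ∧ (p.2 = q.2 → p = q)

/-- The cost of a partial matching between barcodes whose intervals all have left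
endpoint `0` (an interval is recorded by its right endpoint) is at most `c`:
every unmatched interval has half-length at most `c`, and matched right endpoints differ
by at most `c`. -/
def MatchingCostLE {m n : ℕ} (f : Fin m → ℝ) (g : Fin n → ℝ)
    (M : Finset (Fin m × Fin n)) (c : ℝ) : Prop :=
  (∀ i : Fin m, i ∉ M.image Prod.fst → f i / 2 ≤ c) ∧
  (∀ j : Fin n, j ∉ M.image Prod.snd → g j / 2 ≤ c) ∧
  (∀ p ∈ M, |f p.1 - g p.2| ≤ c)

/-- The bottleneck distance between two barcodes whose intervals all have left endpoint
`0`, recorded by their right endpoints `f` and `g`. -/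
noncomputable def bottleneckDist {m n : ℕ} (f : Fin m → ℝ) (g : Fin n → ℝ) : ℝ :=
  sInf {c : ℝ | 0 ≤ c ∧ ∃ M : Finset (Fin m × Fin n),
    IsPartialMatching M ∧ MatchingCostLE f g M c}

lemma key_le {m n : ℕ} (f : Fin m → ℝ) (g : Fin n → ℝ)
    (a b : ℕ → ℝ) (ha : Antitone a) (hb : Antitone b)
    (ha0 : ∀ k, m ≤ k → a k = 0)
    (σ : Fin m ≃ Fin m) (haf : ∀ i : Fin m, a i = f (σ i))
    (τ : Fin n ≃ Fin n) (hbg : ∀ j : Fin n, b j = g (τ j))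
    (hbnn : ∀ k, 0 ≤ b k)
    (c : ℝ) (hc : 0 ≤ c) (M : Finset (Fin m × Fin n))
    (hM : IsPartialMatching M) (hcost : MatchingCostLE f g M c)
    (k : ℕ) : a k ≤ b k + 2 * c := by
  by_contra h
  push_neg at h
  have hbk : 0 ≤ b k := hbnn k
  have hak : 0 < a k := lt_of_le_of_lt (by linarith) h
  have hkm : k < m := by
    by_contra hk
    push_neg at hk
    rw [ha0 k hk] at hak
    exact lt_irrefl 0 hak
  set S : Finset (Fin m) := Finset.univ.filter (fun i => b k + 2 * c < f i) with hS
  set T : Finset (Fin n) := Finset.univ.filter (fun j => b k < g j) with hT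
  set N : Finset (Fin m × Fin n) := M.filter (fun p => b k + 2 * c < f p.1) with hN
  have hTk : T.card ≤ k := by
    have h1 : T.card ≤ (Finset.range k).card := by
      apply Finset.card_le_card_of_injOn (fun j => ((τ.symm j : Fin n) : ℕ))
      · intro j hj
        simp only [Finset.mem_coe, hT, Finset.mem_filter, Finset.mem_univ, true_and] at hj
        simp only [Finset.mem_coe, Finset.mem_range]
        by_contra hlt
        push_neg at hlt
        have h2 : b ((τ.symm j : Fin n) : ℕ) ≤ b k := hb hlt
        have h3 : b ((τ.symm j : Fin n) : ℕ) = g j := by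
          rw [hbg (τ.symm j), Equiv.apply_symm_apply]
        linarith
      · intro x _ y _ hxy
        exact τ.symm.injective (Fin.val_injective hxy)
    simpa using h1
  have hSk : k + 1 ≤ S.card := by
    have h1 : (Finset.range (k + 1)).card ≤ S.card := by
      apply Finset.card_le_card_of_injOn
        (fun i => σ ⟨min i k, lt_of_le_of_lt (min_le_right i k) hkm⟩)
      · intro i hi
        simp only [Finset.mem_coe, Finset.mem_range] at hi
        simp only [Finset.mem_coe, hS, Finset.mem_filter, Finset.mem_univ, true_and]
        have h2 : a (min i k) = f (σ ⟨min i k, lt_of_le_of_lt (min_le_right i k) hkm⟩) := by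
          have := haf ⟨min i k, lt_of_le_of_lt (min_le_right i k) hkm⟩
          exact this
        have h3 : a k ≤ a (min i k) := ha (min_le_right i k)
        linarith
      · intro x hx y hy hxy
        rw [Finset.mem_coe, Finset.mem_range] at hx hy
        have := σ.injective hxy
        have h4 : min x k = min y k := congrArg Fin.val this
        omega
    simpa using h1
  have hSN : S.card ≤ N.card := by
    have hsub : S ⊆ N.image Prod.fst := by
      intro i hi
      simp only [hS, Finset.mem_filter, Finset.mem_univ, true_and] at hi
      have hmat : i ∈ M.image Prod.fst := by
        by_contra hni
        have := hcost.1 i hni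
        linarith
      rw [Finset.mem_image] at hmat
      obtain ⟨p, hp, hpi⟩ := hmat
      rw [Finset.mem_image]
      exact ⟨p, by simp only [hN, Finset.mem_filter]; exact ⟨hp, by rw [hpi]; exact hi⟩, hpi⟩
    calc S.card ≤ (N.image Prod.fst).card := Finset.card_le_card hsub
      _ ≤ N.card := Finset.card_image_le
  have hNT : N.card ≤ T.card := by
    have himg : N.image Prod.snd ⊆ T := by
      intro j hj
      rw [Finset.mem_image] at hj
      obtain ⟨p, hp, hpj⟩ := hj
      simp only [hN, Finset.mem_filter] at hp
      have := hcost.2.2 p hp.1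
      have habs : f p.1 - g p.2 ≤ c := le_of_abs_le this |>.trans_eq rfl
      have h5 := abs_le.mp this
      simp only [hT, Finset.mem_filter, Finset.mem_univ, true_and]
      rw [← hpj]
      linarith [hp.2, h5.2]
    have hcardeq : (N.image Prod.snd).card = N.card := by
      apply Finset.card_image_of_injOn
      intro p hp q hq hpq
      rw [Finset.mem_coe, hN, Finset.mem_filter] at hp hq
      exact (hM p hp.1 q hq.1).2 hpq
    calc N.card = (N.image Prod.snd).card := hcardeq.symm
      _ ≤ T.card := Finset.card_le_card himg
  omega

lemma swap_matching {m n : ℕ} (M : Finset (Fin m × Fin n)) (hM : IsPartialMatching M) :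
    IsPartialMatching (M.image Prod.swap) := by
  intro p hp q hq
  rw [Finset.mem_image] at hp hq
  obtain ⟨p', hp', rfl⟩ := hp
  obtain ⟨q', hq', rfl⟩ := hq
  constructor
  · intro h1
    have := (hM p' hp' q' hq').2 h1
    rw [this]
  · intro h1
    have := (hM p' hp' q' hq').1 h1
    rw [this]

lemma swap_cost {m n : ℕ} (f : Fin m → ℝ) (g : Fin n → ℝ)
    (M : Finset (Fin m × Fin n)) (c : ℝ) (hcost : MatchingCostLE f g M c) :
    MatchingCostLE g f (M.image Prod.swap) c := by
  refine ⟨?_, ?_, ?_⟩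
  · intro j hj
    apply hcost.2.1 j
    intro hmem
    apply hj
    rw [Finset.mem_image] at hmem ⊢
    obtain ⟨p, hp, hpj⟩ := hmem
    exact ⟨p.swap, Finset.mem_image_of_mem _ hp, hpj⟩
  · intro i hi
    apply hcost.1 i
    intro hmem
    apply hi
    rw [Finset.mem_image] at hmem ⊢
    obtain ⟨p, hp, hpi⟩ := hmem
    exact ⟨p.swap, Finset.mem_image_of_mem _ hp, hpi⟩
  · intro p hp
    rw [Finset.mem_image] at hp
    obtain ⟨q, hq, rfl⟩ := hp
    have := hcost.2.2 q hq
    rw [abs_sub_comm] at this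
    simpa using this

/-- if all intervals of two barcodes have left endpoint `0`, and `a`, `b`
are the sequences of right endpoints listed in non-increasing order and padded by zeros,
then `‖a − b‖_∞ ≤ 2·d_b(B,B')`. -/
theorem linfty_sorted_le_two_bottleneck {m n : ℕ} (f : Fin m → ℝ) (g : Fin n → ℝ)
    (hf : ∀ i, 0 < f i) (hg : ∀ j, 0 < g j)
    (a b : ℕ → ℝ) (ha : Antitone a) (hb : Antitone b)
    (ha0 : ∀ k, m ≤ k → a k = 0) (hb0 : ∀ k, n ≤ k → b k = 0)
    (haf : ∃ σ : Fin m ≃ Fin m, ∀ i : Fin m, a i = f (σ i))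
    (hbg : ∃ τ : Fin n ≃ Fin n, ∀ j : Fin n, b j = g (τ j)) :
    ∀ k : ℕ, |a k - b k| ≤ 2 * bottleneckDist f g := by
  obtain ⟨σ, haf⟩ := haf
  obtain ⟨τ, hbg⟩ := hbg
  have hann : ∀ k, 0 ≤ a k := fun k => by
    have h1 : a (m + k) = 0 := ha0 _ (Nat.le_add_right m k)
    have h2 : a (m + k) ≤ a k := ha (Nat.le_add_left k m)
    linarith
  have hbnn : ∀ k, 0 ≤ b k := fun k => by
    have h1 : b (n + k) = 0 := hb0 _ (Nat.le_add_right n k)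
    have h2 : b (n + k) ≤ b k := hb (Nat.le_add_left k n)
    linarith
  intro k
  set Sc : Set ℝ := {c : ℝ | 0 ≤ c ∧ ∃ M : Finset (Fin m × Fin n),
    IsPartialMatching M ∧ MatchingCostLE f g M c} with hSc
  have hne : Sc.Nonempty := by
    refine ⟨(∑ i, f i) + (∑ j, g j), ?_, ∅, ?_, ?_, ?_, ?_⟩
    · exact add_nonneg (Finset.sum_nonneg fun i _ => (hf i).le)
        (Finset.sum_nonneg fun j _ => (hg j).le)
    · intro p hp; simp at hp
    · intro i _
      have h1 : f i ≤ ∑ i', f i' :=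
        Finset.single_le_sum (fun i' _ => (hf i').le) (Finset.mem_univ i)
      have h2 : 0 ≤ ∑ j, g j := Finset.sum_nonneg fun j _ => (hg j).le
      have := (hf i).le
      linarith
    · intro j _
      have h1 : g j ≤ ∑ j', g j' :=
        Finset.single_le_sum (fun j' _ => (hg j').le) (Finset.mem_univ j)
      have h2 : 0 ≤ ∑ i, f i := Finset.sum_nonneg fun i _ => (hf i).le
      have := (hg j).le
      linarith
    · intro p hp; simp at hp
  have hkey : |a k - b k| / 2 ≤ sInf Sc := by
    apply le_csInf hne
    intro c hc
    obtain ⟨hc0, M, hM, hcost⟩ := hc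
    have h1 : a k ≤ b k + 2 * c :=
      key_le f g a b ha hb ha0 σ haf τ hbg hbnn c hc0 M hM hcost k
    have h2 : b k ≤ a k + 2 * c :=
      key_le g f b a hb ha hb0 τ hbg σ haf hann c hc0 (M.image Prod.swap)
        (swap_matching M hM) (swap_cost f g M c hcost) k
    have h3 : |a k - b k| ≤ 2 * c := by
      rw [abs_sub_le_iff]
      constructor <;> linarith
    linarith
  rw [bottleneckDist, ← hSc]
  linarith [hkey]
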